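/- Let n ≥ 1 and let W be a symmetric positive semidefinite real n×n matrix, and let m ≥ 0 and ν ≥ 0 be integers. Let a < b be real numbers and f : [a,b] → ℝ^n be continuous. For 0 ≤ j ≤ ν define w_{m,j} = ∫_a^b ((s-a)/(b-a))^m · P_{m,j}((s-a)/(b-a)) · f(s) ds ∈ ℝ^n. Then ∫_a^b ((s-a)/(b-a))^m · f(s)ᵀ W f(s) ds ≥ (1/(b-a)) · Σ_{j=0}^{ν} (m+2j+1) · w_{m,j}ᵀ W w_{m,j}. -/

import Mathlib

/-!
By the Rodrigues formula and `j`-fold integration by parts, whose boundary terms vanish because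
`x ^ (m + j) * (x - 1) ^ j` has zeros of order `j` at `0` and `1`, the polynomials `P_{m,j}` are
orthogonal on `[0, 1]` for the weight `x ^ m`, with `∫₀¹ x ^ m P_{m,j} ^ 2 = 1 / (m + 2j + 1)`
(from the leading coefficient of `P_{m,j}` and a Beta integral). After the substitution
`x = (s - a) / (b - a)` the inequality is Bessel's inequality for the positive semidefinite form
`(g, h) ↦ ∫ x ^ m gᵀ W h`: expand `0 ≤ ∫ x ^ m (f - h)ᵀ W (f - h)` for the projection
`h = ∑ⱼ (m + 2j + 1) / (b - a) * P_{m,j}(x) • w_{m,j}`, in which both cross terms `fᵀ W h`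
and `hᵀ W f` integrate to `∑ⱼ (m + 2j + 1) / (b - a) * w_{m,j}ᵀ W w_{m,j}`.
-/

open Polynomial Matrix MeasureTheory intervalIntegral
open scoped Nat

namespace Polynomial

theorem eval_iterate_derivative_eq_zero_of_pow_dvd {R : Type*} [CommRing R] {p : R[X]} {t : R}
    {j l : ℕ} (h : (X - C t) ^ j ∣ p) (hl : l < j) : (derivative^[l] p).eval t = 0 :=
  dvd_iff_isRoot.mp <| (dvd_pow_self _ (Nat.sub_ne_zero_of_lt hl)).trans
    (pow_sub_dvd_iterate_derivative_of_pow_dvd l h)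

theorem iterate_derivative_eq_C_of_natDegree_le {R : Type*} [Semiring R] {p : R[X]} {k : ℕ}
    (h : p.natDegree ≤ k) : derivative^[k] p = C ((k ! : R) * p.coeff k) := by
  rw [eq_C_of_natDegree_le_zero ((natDegree_iterate_derivative p k).trans (by omega)),
    coeff_iterate_derivative, zero_add, Nat.descFactorial_self, nsmul_eq_mul]

theorem integral_eval_derivative_mul (p q : ℝ[X]) (a b : ℝ) :
    ∫ x in a..b, (derivative p).eval x * q.eval x
      = p.eval b * q.eval b - p.eval a * q.eval a
        - ∫ x in a..b, p.eval x * (derivative q).eval x := by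
  have h := integral_mul_deriv_eq_deriv_mul (fun x _ => q.hasDerivAt x)
    (fun x _ => p.hasDerivAt x) (q.derivative.continuous.intervalIntegrable a b)
    (p.derivative.continuous.intervalIntegrable a b)
  simpa only [mul_comm] using h

theorem integral_eval_iterate_derivative_mul {p : ℝ[X]} {a b : ℝ} {k : ℕ}
    (ha : ∀ l < k, (derivative^[l] p).eval a = 0) (hb : ∀ l < k, (derivative^[l] p).eval b = 0)
    (q : ℝ[X]) :
    ∫ x in a..b, (derivative^[k] p).eval x * q.eval x
      = (-1) ^ k * ∫ x in a..b, p.eval x * (derivative^[k] q).eval x := by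
  induction k generalizing q with
  | zero => simp
  | succ k ih =>
    rw [Function.iterate_succ_apply', integral_eval_derivative_mul, ha k k.lt_succ_self,
      hb k k.lt_succ_self, ih (fun l hl => ha l (hl.trans k.lt_succ_self))
        (fun l hl => hb l (hl.trans k.lt_succ_self)), Function.iterate_succ_apply]
    ring

end Polynomial

theorem integral_pow_mul_sub_one_pow (p q : ℕ) :
    ∫ x in (0 : ℝ)..1, x ^ p * (x - 1) ^ q = (-1) ^ q * p ! * q ! / (p + q + 1)! := by
  induction q generalizing p with
  | zero =>
    simp only [pow_zero, mul_one, integral_pow, Nat.factorial_succ]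
    push_cast
    field_simp
    simp
  | succ q ih =>
    have hparts : ((p : ℝ) + 1) * ∫ x in (0 : ℝ)..1, x ^ p * (x - 1) ^ (q + 1)
        = -∫ x in (0 : ℝ)..1, x ^ (p + 1) * (((q : ℝ) + 1) * (x - 1) ^ q) := by
      have h := integral_eval_derivative_mul (X ^ (p + 1)) ((X - 1) ^ (q + 1)) 0 1
      simpa [derivative_pow, mul_assoc] using h
    simp only [mul_left_comm _ ((q : ℝ) + 1), intervalIntegral.integral_const_mul, ih,
      show p + 1 + q + 1 = p + (q + 1) + 1 by ring] at hparts
    simp only [Nat.factorial_succ] at hparts ⊢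
    push_cast at hparts ⊢
    field_simp at hparts ⊢
    linear_combination hparts

theorem intervalIntegral.integral_comp_sub_div_sub {E : Type*} [NormedAddCommGroup E]
    [NormedSpace ℝ E] (F : ℝ → E) (a b : ℝ) :
    ∫ s in a..b, F ((s - a) / (b - a)) = (b - a) • ∫ x in (0 : ℝ)..1, F x := by
  rcases eq_or_ne (b - a) 0 with h | h
  · simp [sub_eq_zero.1 h]
  · simp only [sub_div, integral_comp_div_sub F h, sub_self]
    rw [← sub_div, div_self h]

noncomputable def rodriguesPoly (m j : ℕ) : ℝ[X] := X ^ (m + j) * (X - 1) ^ j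

theorem monic_rodriguesPoly (m j : ℕ) : (rodriguesPoly m j).Monic := by
  rw [rodriguesPoly, ← C_1]
  exact (monic_X_pow _).mul ((monic_X_sub_C 1).pow j)

theorem natDegree_rodriguesPoly (m j : ℕ) : (rodriguesPoly m j).natDegree = m + 2 * j := by
  rw [rodriguesPoly, ← C_1, (monic_X_pow _).natDegree_mul ((monic_X_sub_C 1).pow j),
    natDegree_X_pow, (monic_X_sub_C 1).natDegree_pow, natDegree_X_sub_C]
  ring

theorem eval_iterate_derivative_rodriguesPoly_zero {m j l : ℕ} (hl : l < j) :
    (derivative^[l] (rodriguesPoly m j)).eval 0 = 0 :=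
  eval_iterate_derivative_eq_zero_of_pow_dvd (by
    rw [map_zero, sub_zero]
    exact (pow_dvd_pow X (by omega)).mul_right _) hl

theorem eval_iterate_derivative_rodriguesPoly_one {m j l : ℕ} (hl : l < j) :
    (derivative^[l] (rodriguesPoly m j)).eval 1 = 0 :=
  eval_iterate_derivative_eq_zero_of_pow_dvd (by
    rw [map_one]
    exact dvd_mul_left _ _) hl

def IsRodriguesPoly (m j : ℕ) (p : ℝ[X]) : Prop :=
  X ^ m * p = C (1 / (j ! : ℝ)) * derivative^[j] (rodriguesPoly m j)

namespace IsRodriguesPoly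

variable {m j : ℕ} {p : ℝ[X]}

theorem coeff_eq (hp : IsRodriguesPoly m j p) (i : ℕ) :
    p.coeff i = 1 / (j ! : ℝ) * (i + m + j).descFactorial j
      * (rodriguesPoly m j).coeff (i + m + j) := by
  have h := congrArg (coeff · (i + m)) hp
  simp only [coeff_X_pow_mul, coeff_C_mul, coeff_iterate_derivative, nsmul_eq_mul] at h
  rw [h, mul_assoc]

theorem natDegree_le (hp : IsRodriguesPoly m j p) : p.natDegree ≤ j := by
  refine natDegree_le_iff_coeff_eq_zero.2 fun i hi => ?_
  rw [hp.coeff_eq, coeff_eq_zero_of_natDegree_lt (by rw [natDegree_rodriguesPoly]; omega),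
    mul_zero]

theorem coeff_self (hp : IsRodriguesPoly m j p) :
    p.coeff j = (m + 2 * j).descFactorial j / (j ! : ℝ) := by
  rw [hp.coeff_eq, show j + m + j = m + 2 * j by ring, ← natDegree_rodriguesPoly m j,
    (monic_rodriguesPoly m j).coeff_natDegree, natDegree_rodriguesPoly]
  ring

theorem integral_mul_eval (hp : IsRodriguesPoly m j p) (q : ℝ[X]) :
    ∫ x in (0 : ℝ)..1, x ^ m * p.eval x * q.eval x
      = (-1) ^ j / j ! *
        ∫ x in (0 : ℝ)..1, (rodriguesPoly m j).eval x * (derivative^[j] q).eval x := by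
  have hev (x : ℝ) :
      x ^ m * p.eval x = 1 / (j ! : ℝ) * (derivative^[j] (rodriguesPoly m j)).eval x := by
    simpa using congrArg (eval x) hp
  simp only [hev, mul_assoc, intervalIntegral.integral_const_mul]
  rw [integral_eval_iterate_derivative_mul (fun l => eval_iterate_derivative_rodriguesPoly_zero)
    (fun l => eval_iterate_derivative_rodriguesPoly_one)]
  ring

theorem integral_mul_eval_eq_zero (hp : IsRodriguesPoly m j p) {q : ℝ[X]}
    (hq : q.natDegree < j) : ∫ x in (0 : ℝ)..1, x ^ m * p.eval x * q.eval x = 0 := by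
  simp [hp.integral_mul_eval, iterate_derivative_eq_zero hq]

theorem integral_mul_self (hp : IsRodriguesPoly m j p) :
    ∫ x in (0 : ℝ)..1, x ^ m * p.eval x * p.eval x = 1 / (m + 2 * j + 1) := by
  rw [hp.integral_mul_eval, iterate_derivative_eq_C_of_natDegree_le hp.natDegree_le]
  simp only [eval_C, intervalIntegral.integral_mul_const, rodriguesPoly, eval_mul, eval_pow,
    eval_X, eval_sub, eval_one, integral_pow_mul_sub_one_pow, hp.coeff_self]
  have hdesc : ((m + j)! : ℝ) * (m + 2 * j).descFactorial j = (m + 2 * j)! := by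
    rw [← Nat.sub_eq_of_eq_add (by ring : m + 2 * j = m + j + j)]
    exact_mod_cast Nat.factorial_mul_descFactorial (by omega)
  have hdesc0 : ((m + 2 * j).descFactorial j : ℝ) ≠ 0 := by
    exact_mod_cast (Nat.descFactorial_pos.2 (by omega)).ne'
  rw [show m + j + j + 1 = m + 2 * j + 1 by ring, Nat.factorial_succ, Nat.cast_mul, ← hdesc]
  field_simp
  rw [← pow_mul, pow_mul', neg_one_sq, one_pow]
  push_cast
  ring

end IsRodriguesPoly

theorem integral_mul_eval_mul_eval_of_isRodriguesPoly {m : ℕ} {P : ℕ → ℝ[X]}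
    (hP : ∀ j, IsRodriguesPoly m j (P j)) (j k : ℕ) :
    ∫ x in (0 : ℝ)..1, x ^ m * (P j).eval x * (P k).eval x
      = if j = k then 1 / (m + 2 * j + 1 : ℝ) else 0 := by
  rcases lt_trichotomy j k with hjk | rfl | hjk
  · calc ∫ x in (0 : ℝ)..1, x ^ m * (P j).eval x * (P k).eval x
          = ∫ x in (0 : ℝ)..1, x ^ m * (P k).eval x * (P j).eval x := by
            simp only [mul_right_comm _ ((P j).eval _)]
      _ = _ := by
            rw [(hP k).integral_mul_eval_eq_zero ((hP j).natDegree_le.trans_lt hjk),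
              if_neg hjk.ne]
  · rw [(hP j).integral_mul_self, if_pos rfl]
  · rw [(hP j).integral_mul_eval_eq_zero ((hP k).natDegree_le.trans_lt hjk), if_neg hjk.ne']

section Bessel

variable {ι κ : Type*} [Fintype κ]

theorem sub_sum_smul_dotProduct_mulVec_sub_sum_smul {R : Type*} [CommRing R]
    (W : Matrix κ κ R) (T : Finset ι) (x : κ → R) (t : ι → R) (w : ι → κ → R) :
    (x - ∑ j ∈ T, t j • w j) ⬝ᵥ W *ᵥ (x - ∑ j ∈ T, t j • w j)
      = x ⬝ᵥ W *ᵥ x - ∑ j ∈ T, t j * (x ⬝ᵥ (W *ᵥ w j + w j ᵥ* W))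
        + ∑ j ∈ T, ∑ k ∈ T, t j * t k * (w j ⬝ᵥ W *ᵥ w k) := by
  have hswap (v : κ → R) : v ⬝ᵥ W *ᵥ x = x ⬝ᵥ v ᵥ* W := by
    rw [dotProduct_mulVec, dotProduct_comm]
  simp only [mulVec_sub, sub_dotProduct, dotProduct_sub, mulVec_sum, sum_dotProduct,
    dotProduct_sum, mulVec_smul, smul_dotProduct, dotProduct_smul, smul_eq_mul]
  simp only [hswap, dotProduct_add, mul_add, mul_sub, Finset.sum_add_distrib,
    Finset.sum_sub_distrib, Finset.mul_sum]
  rw [Finset.sum_comm (s := T) (t := T) (f := fun k j => t k * (t j * (w j ⬝ᵥ W *ᵥ w k)))]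
  simp only [← mul_assoc, mul_comm (t _) (t _)]
  ring

theorem intervalIntegral.integral_dotProduct_const {a b : ℝ} {g : ℝ → κ → ℝ}
    (hg : ∀ i, IntervalIntegrable (fun s => g s i) volume a b) (y : κ → ℝ) :
    ∫ s in a..b, g s ⬝ᵥ y = (fun i => ∫ s in a..b, g s i) ⬝ᵥ y := by
  simp only [dotProduct]
  rw [integral_finsetSum fun i _ => (hg i).mul_const (y i)]
  simp only [integral_mul_const]

theorem sum_inv_mul_dotProduct_mulVec_le_integral [DecidableEq ι] (W : Matrix κ κ ℝ)
    (hW : ∀ v, 0 ≤ v ⬝ᵥ W *ᵥ v) {a b : ℝ} (hab : a ≤ b) {ρ : ℝ → ℝ}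
    (hρ : ContinuousOn ρ (Set.Icc a b)) (hρ0 : ∀ s ∈ Set.Icc a b, 0 ≤ ρ s) (T : Finset ι)
    {ψ : ι → ℝ → ℝ} (hψ : ∀ j, ContinuousOn (ψ j) (Set.Icc a b)) {d : ι → ℝ}
    (horth : ∀ j ∈ T, ∀ k ∈ T,
      ∫ s in a..b, ρ s * ψ j s * ψ k s = if j = k then d j else 0)
    {f : ℝ → κ → ℝ} (hf : ContinuousOn f (Set.Icc a b)) {w : ι → κ → ℝ}
    (hw : ∀ j i, w j i = ∫ s in a..b, ρ s * ψ j s * f s i) :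
    ∑ j ∈ T, (d j)⁻¹ * (w j ⬝ᵥ W *ᵥ w j) ≤ ∫ s in a..b, ρ s * (f s ⬝ᵥ W *ᵥ f s) := by
  have hII {g : ℝ → ℝ} (hg : ContinuousOn g (Set.Icc a b)) :
      IntervalIntegrable g volume a b :=
    hg.intervalIntegrable_of_Icc hab
  have hcross (j : ι) (y : κ → ℝ) :
      ∫ s in a..b, ρ s * ψ j s * (f s ⬝ᵥ y) = w j ⬝ᵥ y := by
    have hsmul (s : ℝ) :
        ρ s * ψ j s * (f s ⬝ᵥ y) = ((ρ s * ψ j s) • f s) ⬝ᵥ y := by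
      rw [smul_dotProduct, smul_eq_mul]
    simp only [hsmul]
    rw [integral_dotProduct_const fun i => hII (by fun_prop)]
    congr 1
    ext i
    exact (hw j i).symm
  set c : ι → ℝ := fun j => (d j)⁻¹
  have hexpand : ∫ s in a..b, ρ s * ((f s - ∑ j ∈ T, (c j * ψ j s) • w j) ⬝ᵥ
        W *ᵥ (f s - ∑ j ∈ T, (c j * ψ j s) • w j))
      = ∫ s in a..b, (ρ s * (f s ⬝ᵥ W *ᵥ f s)
          - ∑ j ∈ T, c j * (ρ s * ψ j s * (f s ⬝ᵥ (W *ᵥ w j + w j ᵥ* W)))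
          + ∑ j ∈ T, ∑ k ∈ T,
              c j * c k * (w j ⬝ᵥ W *ᵥ w k) * (ρ s * ψ j s * ψ k s)) := by
    refine integral_congr fun s _ => ?_
    rw [sub_sum_smul_dotProduct_mulVec_sub_sum_smul, mul_add, mul_sub, Finset.mul_sum,
      Finset.mul_sum]
    refine congrArg₂ _ (congrArg₂ _ rfl (Finset.sum_congr rfl fun j _ => by ring))
      (Finset.sum_congr rfl fun j _ => ?_)
    rw [Finset.mul_sum]
    exact Finset.sum_congr rfl fun k _ => by ring
  have hgram : ∀ j ∈ T,
      ∫ s in a..b, ∑ k ∈ T, c j * c k * (w j ⬝ᵥ W *ᵥ w k) * (ρ s * ψ j s * ψ k s)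
        = c j * c j * d j * (w j ⬝ᵥ W *ᵥ w j) := by
    intro j hj
    rw [integral_finsetSum fun k _ => hII (by fun_prop)]
    simp only [intervalIntegral.integral_const_mul]
    rw [Finset.sum_congr rfl fun k hk => by rw [horth j hj k hk]]
    simp only [mul_ite, mul_zero, Finset.sum_ite_eq, if_pos hj]
    ring
  have hdiag (j : ι) : w j ⬝ᵥ (W *ᵥ w j + w j ᵥ* W) = 2 * (w j ⬝ᵥ W *ᵥ w j) := by
    rw [dotProduct_add, dotProduct_comm (w j) (w j ᵥ* W), ← dotProduct_mulVec, two_mul]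
  -- also when `d j = 0`, as `0⁻¹ = 0`
  have hc (j : ι) : c j * c j * d j = c j := by simpa using mul_self_mul_inv (d j)⁻¹
  have hnonneg : 0 ≤ ∫ s in a..b, ρ s * ((f s - ∑ j ∈ T, (c j * ψ j s) • w j) ⬝ᵥ
        W *ᵥ (f s - ∑ j ∈ T, (c j * ψ j s) • w j)) :=
    integral_nonneg hab fun s hs => mul_nonneg (hρ0 s hs) (hW _)
  rw [hexpand, integral_add (hII (by fun_prop)) (hII (by fun_prop)),
    integral_sub (hII (by fun_prop)) (hII (by fun_prop)),
    integral_finsetSum fun j _ => hII (by fun_prop),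
    integral_finsetSum fun j _ => hII (by fun_prop), Finset.sum_congr rfl hgram] at hnonneg
  simp only [intervalIntegral.integral_const_mul, hcross, hdiag, hc, mul_left_comm _ (2 : ℝ),
    ← Finset.mul_sum] at hnonneg
  linarith

end Bessel

theorem stmt_10_general (P : ℕ → ℕ → Polynomial ℝ)
    (hP0 : ∀ m, P m 0 = 1)
    (hP : ∀ m n, 1 ≤ n →
      (X : Polynomial ℝ) ^ m * P m n
        = C (1 / (n.factorial : ℝ)) *
            derivative^[n] (X ^ (m + n) * (X - 1) ^ n))
    (n : ℕ)
    (W : Matrix (Fin n) (Fin n) ℝ)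
    (hWpsd : ∀ v : Fin n → ℝ, 0 ≤ v ⬝ᵥ W.mulVec v)
    (m ν : ℕ) (a b : ℝ) (hab : a < b)
    (f : ℝ → Fin n → ℝ) (hf : ContinuousOn f (Set.Icc a b))
    (w : ℕ → Fin n → ℝ)
    (hw : ∀ j i, w j i =
      ∫ s in a..b,
        ((s - a) / (b - a)) ^ m * (P m j).eval ((s - a) / (b - a)) * f s i) :
    (1 / (b - a)) * ∑ j ∈ Finset.range (ν + 1),
        ((m : ℝ) + 2 * j + 1) * (w j ⬝ᵥ W.mulVec (w j))
      ≤ ∫ s in a..b, ((s - a) / (b - a)) ^ m * (f s ⬝ᵥ W.mulVec (f s)) := by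
  have hrod (j : ℕ) : IsRodriguesPoly m j (P m j) := by
    rcases j.eq_zero_or_pos with rfl | hj
    · simp [IsRodriguesPoly, rodriguesPoly, hP0]
    · exact hP m j hj
  have horth (j k : ℕ) :
      ∫ s in a..b, ((s - a) / (b - a)) ^ m * (P m j).eval ((s - a) / (b - a))
        * (P m k).eval ((s - a) / (b - a))
        = if j = k then (b - a) / (m + 2 * j + 1) else 0 := by
    rw [integral_comp_sub_div_sub (fun x => x ^ m * (P m j).eval x * (P m k).eval x),
      integral_mul_eval_mul_eval_of_isRodriguesPoly hrod, smul_eq_mul]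
    split_ifs <;> ring
  have hbessel := sum_inv_mul_dotProduct_mulVec_le_integral W hWpsd hab.le (by fun_prop)
    (fun s hs => pow_nonneg (div_nonneg (sub_nonneg.2 hs.1) (sub_pos.2 hab).le) m)
    (Finset.range (ν + 1)) (fun j => by fun_prop) (fun j _ k _ => horth j k) hf hw
  convert hbessel using 1
  rw [Finset.mul_sum]
  refine Finset.sum_congr rfl fun j _ => ?_
  rw [inv_div]
  ring

/-- Lemma 2 of the paper (integral inequality): for a symmetric positive
semidefinite `W`, a continuous `f : [a,b] → ℝⁿ`, and the projections
`w_{m,j} = ∫_a^b ((s-a)/(b-a))^m P_{m,j}((s-a)/(b-a)) f(s) ds`,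
`∫_a^b ((s-a)/(b-a))^m f(s)ᵀ W f(s) ds
  ≥ (1/(b-a)) ∑_{j=0}^ν (m+2j+1) w_{m,j}ᵀ W w_{m,j}`. -/
theorem stmt_10 (P : ℕ → ℕ → Polynomial ℝ)
    (hP0 : ∀ m, P m 0 = 1)
    (hP : ∀ m n, 1 ≤ n →
      (X : Polynomial ℝ) ^ m * P m n
        = C (1 / (n.factorial : ℝ)) *
            derivative^[n] (X ^ (m + n) * (X - 1) ^ n))
    (n : ℕ) (hn : 1 ≤ n)
    (W : Matrix (Fin n) (Fin n) ℝ) (hWsym : W.IsSymm)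
    (hWpsd : ∀ v : Fin n → ℝ, 0 ≤ v ⬝ᵥ W.mulVec v)
    (m ν : ℕ) (a b : ℝ) (hab : a < b)
    (f : ℝ → Fin n → ℝ) (hf : ContinuousOn f (Set.Icc a b))
    (w : ℕ → Fin n → ℝ)
    (hw : ∀ j i, w j i =
      ∫ s in a..b,
        ((s - a) / (b - a)) ^ m * (P m j).eval ((s - a) / (b - a)) * f s i) :
    (1 / (b - a)) * ∑ j ∈ Finset.range (ν + 1),
        ((m : ℝ) + 2 * j + 1) * (w j ⬝ᵥ W.mulVec (w j))
      ≤ ∫ s in a..b, ((s - a) / (b - a)) ^ m * (f s ⬝ᵥ W.mulVec (f s)) :=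
  stmt_10_general P hP0 hP n W hWpsd m ν a b hab f hf w hw
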